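/- For p > 0, the function g(μ) = (1 - ω(μ))/(ω(μ)/μ), where ω(μ) = (1 - p/μ²)/(1 + p/μ), is strictly decreasing in μ on (√p, ∞). Equivalently, g(μ) = μ(1 - ω(μ))/ω(μ) decreases as μ increases beyond √p. -/
import Mathlib


theorem stmt14 (p : ℝ) (hp : 0 < p) :
    StrictAntiOn
      (fun μ : ℝ => μ * (1 - (1 - p / μ ^ 2) / (1 + p / μ)) / ((1 - p / μ ^ 2) / (1 + p / μ)))
      (Set.Ioi (Real.sqrt p)) := by
  have hsq : ∀ μ : ℝ, Real.sqrt p < μ → 0 < μ ∧ p < μ ^ 2 := by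
    intro μ hμ
    have h0 : 0 < Real.sqrt p := Real.sqrt_pos.mpr hp
    have hμ0 : 0 < μ := h0.trans hμ
    constructor
    · exact hμ0
    · nlinarith [Real.sq_sqrt hp.le, sq_nonneg (μ - Real.sqrt p)]
  have key : ∀ μ : ℝ, Real.sqrt p < μ →
      μ * (1 - (1 - p / μ ^ 2) / (1 + p / μ)) / ((1 - p / μ ^ 2) / (1 + p / μ))
        = p * (μ ^ 2 + μ) / (μ ^ 2 - p) := by
    intro μ hμ
    obtain ⟨hμ0, hp2⟩ := hsq μ hμ
    have h1 : μ ≠ 0 := ne_of_gt hμ0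
    have h2 : 1 + p / μ ≠ 0 := by positivity
    have h3 : 1 - p / μ ^ 2 ≠ 0 := by
      have : p / μ ^ 2 < 1 := (div_lt_one (by positivity)).mpr hp2
      linarith
    have h4 : μ ^ 2 - p ≠ 0 := by nlinarith
    field_simp
    ring
  intro x hx y hy hxy
  simp only [Set.mem_Ioi] at hx hy
  obtain ⟨hx0, hx2⟩ := hsq x hx
  obtain ⟨hy0, hy2⟩ := hsq y hy
  simp only
  rw [key x hx, key y hy]
  rw [div_lt_div_iff₀ (by linarith) (by linarith)]
  nlinarith [mul_pos (mul_pos hp (sub_pos.mpr hxy)) (mul_pos hx0 hy0), mul_pos (mul_pos hp (sub_pos.mpr hxy)) (add_pos hx0 hy0), mul_pos hp (sub_pos.mpr hxy)]
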